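/- Let L be the language of an S-adic shift with everywhere growing directive sequence (τ_n) over alphabets of cardinality ≤ d, with sets of images W_n = {τ_0⋯τ_{n-1}(a) : a ∈ A_n} and β_n^- = min_{v∈W_n}|v|, β_n^+ = max_{v∈W_n}|v|. Suppose that each letter i has uniform frequency f_i in L with error δ_n = max over letters i and words w ∈ W_n of ||w|_i/|w| − f_i|. Then for every word w ∈ L of length at least 4β_n^+/δ_n and every letter i, ||w|_i/|w| − f_i| ≤ 2δ_n. -/

import Mathlib

/-!
Measure the deviation of a word `v` from the frequency `c` of a letter by its discrepancy
`|v|_a - c |v|`, which is additive under concatenation. By the Dumont–Thomas decomposition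
`w = s · τ_0⋯τ_{n-1}(w') · p`, the middle part is a concatenation of images of letters, each of
discrepancy at most `δ` times its length, while the discrepancies of `s` and `p` are bounded by
their lengths, hence by `β`. So `w` has discrepancy at most `2β + δ|w| ≤ 2δ|w|` once `|w| ≥ 4β/δ`.
-/

/-- The composition `τ_0 τ_1 ⋯ τ_{n-1} : A_n^* → A_0^*` of the first `n` substitutions of a
directive sequence over the alphabets `A_n = Fin (d n)`. -/
def compSubV (d : ℕ → ℕ) (τ : ∀ n, Fin (d (n + 1)) → List (Fin (d n))) :
    ∀ n, List (Fin (d n)) → List (Fin (d 0))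
  | 0 => id
  | n + 1 => fun w => compSubV d τ n (w.flatMap (τ n))

namespace List

variable {α ι : Type*} [BEq α] (a : α) (c : ℝ)

noncomputable def discrepancy (v : List α) : ℝ := v.count a - c * v.length

lemma discrepancy_append (u v : List α) :
    discrepancy a c (u ++ v) = discrepancy a c u + discrepancy a c v := by
  simp only [discrepancy, count_append, length_append, Nat.cast_add]
  ring

variable {a c}

lemma abs_discrepancy_le_length (hc0 : 0 ≤ c) (hc1 : c ≤ 1) (v : List α) :
    |discrepancy a c v| ≤ v.length := by
  have hcount : (v.count a : ℝ) ≤ v.length := by exact_mod_cast count_le_length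
  rw [discrepancy, abs_le]
  constructor <;> nlinarith [(v.count a).cast_nonneg (α := ℝ)]

lemma abs_discrepancy_append_append_le (s u p : List α) :
    |discrepancy a c (s ++ u ++ p)| ≤
      |discrepancy a c s| + |discrepancy a c u| + |discrepancy a c p| := by
  rw [discrepancy_append, discrepancy_append]
  exact abs_add_three _ _ _

lemma abs_discrepancy_append_append_le_two_mul {s u p : List α} {β δ : ℝ} (hc0 : 0 ≤ c)
    (hc1 : c ≤ 1) (hδ : 0 ≤ δ) (hs : s.length ≤ β) (hp : p.length ≤ β)
    (hu : |discrepancy a c u| ≤ δ * u.length) (hlen : 4 * β ≤ δ * (s ++ u ++ p).length) :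
    |discrepancy a c (s ++ u ++ p)| ≤ 2 * δ * (s ++ u ++ p).length := by
  have hs' := abs_discrepancy_le_length (a := a) hc0 hc1 s
  have hp' := abs_discrepancy_le_length (a := a) hc0 hc1 p
  refine (abs_discrepancy_append_append_le s u p).trans ?_
  simp only [length_append, Nat.cast_add] at hlen ⊢
  nlinarith [s.length.cast_nonneg (α := ℝ), p.length.cast_nonneg (α := ℝ)]

lemma abs_discrepancy_flatMap_le {δ : ℝ} {g : ι → List α} {l : List ι}
    (h : ∀ x ∈ l, |discrepancy a c (g x)| ≤ δ * (g x).length) :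
    |discrepancy a c (l.flatMap g)| ≤ δ * (l.flatMap g).length := by
  induction l with
  | nil => simp [discrepancy]
  | cons x l ih =>
    rw [flatMap_cons, discrepancy_append, length_append, Nat.cast_add, mul_add]
    exact (abs_add_le _ _).trans (add_le_add (h x mem_cons_self)
      (ih fun y hy => h y (mem_cons_of_mem x hy)))

lemma abs_count_div_length_sub_le_iff {v : List α} (hv : v ≠ []) {δ : ℝ} :
    |(v.count a : ℝ) / v.length - c| ≤ δ ↔ |discrepancy a c v| ≤ δ * v.length := by
  have hlen : (0 : ℝ) < v.length := by exact_mod_cast length_pos_iff.mpr hv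
  rw [← div_le_iff₀ hlen, ← abs_of_pos hlen, ← abs_div, abs_of_pos hlen, discrepancy,
    sub_div, mul_div_cancel_right₀ c hlen.ne']

end List

section compSubV

variable {d : ℕ → ℕ} {τ : ∀ n, Fin (d (n + 1)) → List (Fin (d n))}

lemma compSubV_append :
    ∀ n (u v : List (Fin (d n))), compSubV d τ n (u ++ v) = compSubV d τ n u ++ compSubV d τ n v
  | 0, _, _ => rfl
  | n + 1, u, v => by
    simp only [compSubV, List.flatMap_append, compSubV_append n]

lemma compSubV_eq_flatMap (n : ℕ) (w : List (Fin (d n))) :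
    compSubV d τ n w = w.flatMap fun a => compSubV d τ n [a] := by
  induction w with
  | nil => induction n with
    | zero => rfl
    | succ n ih => exact ih
  | cons a w ih => rw [List.flatMap_cons, ← ih, ← compSubV_append, List.singleton_append]

lemma compSubV_ne_nil (hne : ∀ n b, τ n b ≠ []) :
    ∀ n (w : List (Fin (d n))), w ≠ [] → compSubV d τ n w ≠ []
  | 0, _, hw => hw
  | n + 1, w, hw => by
    obtain ⟨a, t, rfl⟩ := List.exists_cons_of_ne_nil hw
    refine compSubV_ne_nil hne n _ ?_
    rw [List.flatMap_cons]
    exact List.append_ne_nil_of_left_ne_nil (hne n a) _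

lemma abs_discrepancy_compSubV_le (hne : ∀ n b, τ n b ≠ []) {n : ℕ} {i : Fin (d 0)} {c δ : ℝ}
    (herr : ∀ a : Fin (d n),
      |((compSubV d τ n [a]).count i : ℝ) / ((compSubV d τ n [a]).length : ℝ) - c| ≤ δ)
    (w : List (Fin (d n))) :
    |(compSubV d τ n w).discrepancy i c| ≤ δ * (compSubV d τ n w).length := by
  rw [compSubV_eq_flatMap]
  refine List.abs_discrepancy_flatMap_le fun a _ => ?_
  exact (List.abs_count_div_length_sub_le_iff
    (compSubV_ne_nil hne n [a] (List.cons_ne_nil a []))).mp (herr a)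

end compSubV

theorem sadic_frequency_error_general (d : ℕ → ℕ)
    (τ : ∀ n, Fin (d (n + 1)) → List (Fin (d n)))
    (hne : ∀ n b, τ n b ≠ [])
    (n : ℕ) (f : Fin (d 0) → ℝ)
    (hf0 : ∀ i, 0 ≤ f i) (hf1 : ∑ i, f i = 1)
    (β δ : ℝ) (hδ : 0 < δ)
    (hβ : ∀ a : Fin (d n), ((compSubV d τ n [a]).length : ℝ) ≤ β)
    (herr : ∀ (i : Fin (d 0)) (a : Fin (d n)),
      |((compSubV d τ n [a]).count i : ℝ) / ((compSubV d τ n [a]).length : ℝ) - f i| ≤ δ)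
    (L : Set (List (Fin (d 0))))
    (hDT : ∀ w ∈ L, ∃ (w' : List (Fin (d n))) (s p : List (Fin (d 0))),
      w = s ++ compSubV d τ n w' ++ p ∧
      (∃ a : Fin (d n), s <:+ compSubV d τ n [a]) ∧
      (∃ a : Fin (d n), p <+: compSubV d τ n [a])) :
    ∀ w ∈ L, ∀ i : Fin (d 0), 4 * β / δ ≤ (w.length : ℝ) →
      |((w.count i : ℝ) / (w.length : ℝ)) - f i| ≤ 2 * δ := by
  intro w hw i hlen
  obtain ⟨w', s, p, rfl, ⟨a, hs⟩, ⟨b, hp⟩⟩ := hDT w hw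
  have hfi1 : f i ≤ 1 := hf1 ▸ Finset.single_le_sum (fun j _ => hf0 j) (Finset.mem_univ i)
  have hβ1 : (1 : ℝ) ≤ β := by
    have := List.length_pos_iff.mpr (compSubV_ne_nil hne n [a] (List.cons_ne_nil a []))
    exact le_trans (by exact_mod_cast this) (hβ a)
  have h4β : 4 * β ≤ δ * (s ++ compSubV d τ n w' ++ p).length := by
    rw [div_le_iff₀ hδ] at hlen
    linarith
  have hw0 : s ++ compSubV d τ n w' ++ p ≠ [] := by
    rintro h
    rw [h, List.length_nil, Nat.cast_zero] at h4β
    linarith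
  rw [List.abs_count_div_length_sub_le_iff hw0]
  exact List.abs_discrepancy_append_append_le_two_mul (hf0 i) hfi1 hδ.le
    (le_trans (by exact_mod_cast hs.length_le) (hβ a))
    (le_trans (by exact_mod_cast hp.length_le) (hβ b))
    (abs_discrepancy_compSubV_le hne (herr i) w') h4β

/-- Frequency transfer for `S`-adic languages: if every image `τ_0⋯τ_{n-1}(a)` has length at
most `β` and relative letter frequencies within `δ` of the frequency vector `f`, then every
word `w ∈ L` of length at least `4β/δ` has relative letter frequencies within `2δ` of `f`. -/
theorem sadic_frequency_error (d : ℕ → ℕ) (hd : ∀ k, 0 < d k)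
    (τ : ∀ n, Fin (d (n + 1)) → List (Fin (d n)))
    (hne : ∀ n b, τ n b ≠ [])
    (n : ℕ) (f : Fin (d 0) → ℝ)
    (hf0 : ∀ i, 0 ≤ f i) (hf1 : ∑ i, f i = 1)
    (β δ : ℝ) (hδ : 0 < δ)
    (hβ : ∀ a : Fin (d n), ((compSubV d τ n [a]).length : ℝ) ≤ β)
    (herr : ∀ (i : Fin (d 0)) (a : Fin (d n)),
      |((compSubV d τ n [a]).count i : ℝ) / ((compSubV d τ n [a]).length : ℝ) - f i| ≤ δ)
    (L : Set (List (Fin (d 0))))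
    (hDT : ∀ w ∈ L, ∃ (w' : List (Fin (d n))) (s p : List (Fin (d 0))),
      w = s ++ compSubV d τ n w' ++ p ∧
      (∃ a : Fin (d n), s <:+ compSubV d τ n [a]) ∧
      (∃ a : Fin (d n), p <+: compSubV d τ n [a])) :
    ∀ w ∈ L, ∀ i : Fin (d 0), 4 * β / δ ≤ (w.length : ℝ) →
      |((w.count i : ℝ) / (w.length : ℝ)) - f i| ≤ 2 * δ :=
  sadic_frequency_error_general d τ hne n f hf0 hf1 β δ hδ hβ herr L hDT
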